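/- Let X, U be independent with U symmetric about 0 and φ_U strictly positive, and suppose the distribution of X is not symmetric about any point. If X', U' is another such pair with X + U equal in distribution to X' + U' and U' symmetric with strictly positive characteristic function, then X and X' have the same phase function: φ_X(t)/|φ_X(t)| = φ_{X'}(t)/|φ_{X'}(t)| wherever both characteristic functions are nonzero. -/

import Mathlib

open MeasureTheory ProbabilityTheory Complex

/-- The characteristic function of a real random variable `X` on `(Ω, μ)`. -/
noncomputable def charFn {Ω : Type*} [MeasurableSpace Ω] (μ : Measure Ω) (X : Ω → ℝ) (t : ℝ) : ℂ :=
  ∫ ω, Complex.exp (t * X ω * Complex.I) ∂μ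

open scoped ComplexOrder

/-! The phase of `X + U` is that of `X` because `φ_{X+U} = φ_X φ_U` and `φ_U > 0`; since the
laws of `X + U` and `X' + U'` agree, the phases of `X` and `X'` agree. -/

theorem Complex.mul_div_norm_mul_of_pos (z : ℂ) {w : ℂ} (hw : 0 < w) :
    z * w / (‖z * w‖ : ℂ) = z / (‖z‖ : ℂ) := by
  obtain ⟨hre, him⟩ := Complex.lt_def.1 hw
  have hw_real : w = (w.re : ℂ) := Complex.ext rfl (by simp [← him])
  have hw_ne : (w.re : ℂ) ≠ 0 := by exact_mod_cast hre.ne'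
  rw [hw_real, norm_mul, Complex.norm_real, Real.norm_of_nonneg hre.le, ofReal_mul,
    mul_div_mul_right _ _ hw_ne]

section charFn

variable {Ω : Type*} [MeasurableSpace Ω] {μ : Measure Ω}

theorem charFn_eq_charFun_map {X : Ω → ℝ} (hX : AEMeasurable X μ) (t : ℝ) :
    charFn μ X t = charFun (μ.map X) t := by
  rw [charFun_apply_real, integral_map hX (by fun_prop)]
  rfl

theorem ProbabilityTheory.IndepFun.charFn_add [IsFiniteMeasure μ] {X U : Ω → ℝ}
    (hX : AEMeasurable X μ) (hU : AEMeasurable U μ) (hXU : IndepFun X U μ) (t : ℝ) :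
    charFn μ (fun ω => X ω + U ω) t = charFn μ X t * charFn μ U t := by
  rw [charFn_eq_charFun_map (X := fun ω => X ω + U ω) (hX.add hU),
    hXU.charFun_map_fun_add_eq_mul hX hU, charFn_eq_charFun_map hX, charFn_eq_charFun_map hU,
    Pi.mul_apply]

end charFn

theorem phase_identifiability_general {Ω Ω' : Type*} [MeasurableSpace Ω] [MeasurableSpace Ω']
    (μ : Measure Ω) (μ' : Measure Ω') [IsProbabilityMeasure μ] [IsProbabilityMeasure μ']
    (X U : Ω → ℝ) (X' U' : Ω' → ℝ)
    (hX : AEMeasurable X μ) (hU : AEMeasurable U μ)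
    (hX' : AEMeasurable X' μ') (hU' : AEMeasurable U' μ')
    (hindep : IndepFun X U μ) (hindep' : IndepFun X' U' μ')
    (hUcf : ∀ t : ℝ, (charFn μ U t).im = 0 ∧ 0 < (charFn μ U t).re)
    (hU'cf : ∀ t : ℝ, (charFn μ' U' t).im = 0 ∧ 0 < (charFn μ' U' t).re)
    (heq : Measure.map (fun ω => X ω + U ω) μ = Measure.map (fun ω => X' ω + U' ω) μ') :
    ∀ t : ℝ, charFn μ X t ≠ 0 → charFn μ' X' t ≠ 0 →
      charFn μ X t / (‖charFn μ X t‖ : ℂ)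
        = charFn μ' X' t / (‖charFn μ' X' t‖ : ℂ) := by
  intro t _ _
  have hsum : charFn μ X t * charFn μ U t = charFn μ' X' t * charFn μ' U' t := by
    rw [← hindep.charFn_add hX hU, ← hindep'.charFn_add hX' hU',
      charFn_eq_charFun_map (X := fun ω => X ω + U ω) (hX.add hU),
      charFn_eq_charFun_map (X := fun ω => X' ω + U' ω) (hX'.add hU'), heq]
  have hU_pos : 0 < charFn μ U t := Complex.lt_def.2 ⟨(hUcf t).2, (hUcf t).1.symm⟩
  have hU'_pos : 0 < charFn μ' U' t := Complex.lt_def.2 ⟨(hU'cf t).2, (hU'cf t).1.symm⟩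
  rw [← Complex.mul_div_norm_mul_of_pos _ hU_pos, hsum,
    Complex.mul_div_norm_mul_of_pos _ hU'_pos]

/-- Identifiability of the phase function: if `X + U =ᵈ X' + U'` where `U, U'` are symmetric
about 0 with strictly positive characteristic functions, `X, U` and `X', U'` are independent
pairs, and `X` is not symmetric about any point, then `X` and `X'` have the same phase
function wherever both characteristic functions are nonzero. -/
theorem phase_identifiability {Ω Ω' : Type*} [MeasurableSpace Ω] [MeasurableSpace Ω']
    (μ : Measure Ω) (μ' : Measure Ω') [IsProbabilityMeasure μ] [IsProbabilityMeasure μ']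
    (X U : Ω → ℝ) (X' U' : Ω' → ℝ)
    (hX : AEMeasurable X μ) (hU : AEMeasurable U μ)
    (hX' : AEMeasurable X' μ') (hU' : AEMeasurable U' μ')
    (hindep : IndepFun X U μ) (hindep' : IndepFun X' U' μ')
    (hUsymm : Measure.map U μ = Measure.map (fun ω => -U ω) μ)
    (hU'symm : Measure.map U' μ' = Measure.map (fun ω => -U' ω) μ')
    (hUcf : ∀ t : ℝ, (charFn μ U t).im = 0 ∧ 0 < (charFn μ U t).re)
    (hU'cf : ∀ t : ℝ, (charFn μ' U' t).im = 0 ∧ 0 < (charFn μ' U' t).re)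
    (hXasymm : ¬ ∃ c : ℝ, Measure.map X μ = Measure.map (fun ω => 2 * c - X ω) μ)
    (heq : Measure.map (fun ω => X ω + U ω) μ = Measure.map (fun ω => X' ω + U' ω) μ') :
    ∀ t : ℝ, charFn μ X t ≠ 0 → charFn μ' X' t ≠ 0 →
      charFn μ X t / (‖charFn μ X t‖ : ℂ)
        = charFn μ' X' t / (‖charFn μ' X' t‖ : ℂ) :=
  phase_identifiability_general μ μ' X U X' U' hX hU hX' hU' hindep hindep' hUcf hU'cf heq
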